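/- Let $R$ be a commutative ring, $d \in R$, and $n \in \mathbb{N}$. Then $T_{-d}\Big( d^{n+1}\, t^{n+1}\, (1+d t)^{-(n+1)} \Big) = d^{n+1}\, t^{n+1}\, (1-d t)^{-1}$. (This is the formal identity computing the contribution of the vertex in the proof of the linear-join formula: the push-forward of the exceptional-divisor term is $\frac{d^{n+1}[V\times\mathbb{P}^m]}{(1+dH)^{n+1}}$, and tensoring it by $\mathscr{O}(-dH)$ yields $\frac{d^{n+1}[V\times\mathbb{P}^m]}{1-dH}$.) -/

import Mathlib

open PowerSeries Finset

/-- The power series `1 + λ t`. -/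
noncomputable def oneAdd {R : Type*} [CommRing R] (l : R) : PowerSeries R :=
  1 + PowerSeries.C l * PowerSeries.X

/-- The inverse power series `(1 + λ t)⁻¹`, via `invOfUnit` (constant coefficient `1`). -/
noncomputable def invOneAdd {R : Type*} [CommRing R] (l : R) : PowerSeries R :=
  PowerSeries.invOfUnit (oneAdd l) 1

/-- The tensor operation `T_λ`, defined coefficientwise:
`T_λ(∑ aᵢ tⁱ) = ∑ aᵢ tⁱ (1+λt)^{-(i+1)}`; the coefficient of `t^m` is the finite sum
`∑_{i=0}^m aᵢ · [t^{m-i}] (1+λt)^{-(i+1)}`. -/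
noncomputable def T {R : Type*} [CommRing R] (l : R) (F : PowerSeries R) : PowerSeries R :=
  PowerSeries.mk fun m => ∑ i ∈ Finset.range (m + 1),
    PowerSeries.coeff i F * PowerSeries.coeff (m - i) (invOneAdd l ^ (i + 1))

/-!
Writing `u = (1 + λt)⁻¹`, the operation is `T_λ F = u · F(t u)`. For `λ = -d` the substitution
`t ↦ t/(1 - dt)` turns `1 + dt` into `(1 - dt)⁻¹`, so `T_{-d}` converts the factor `(1+dt)^{-(n+1)}`
into `(1 - dt)^{n+1}`, which cancels all but one of the `n + 2` factors `(1 - dt)⁻¹` produced by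
`t^{n+1}` and the prefactor. Formally everything follows from `T_λ(t F) = t u · T_λ F`, which holds
modulo every `t^N` because `T_λ F` agrees there with the partial sum
`∑_{i<N} aᵢ tⁱ u^{i+1}`.
-/

section Tensor

variable {R : Type*} [CommRing R]

lemma oneAdd_mul_invOneAdd (l : R) : oneAdd l * invOneAdd l = 1 :=
  mul_invOfUnit (oneAdd l) 1 (by simp [oneAdd])

lemma T_add (l : R) (F G : R⟦X⟧) : T l (F + G) = T l F + T l G := by
  ext m
  simp [T, add_mul, sum_add_distrib]

lemma T_C_mul (l a : R) (F : R⟦X⟧) : T l (C a * F) = C a * T l F := by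
  ext m
  simp [T, mul_sum, mul_assoc]

lemma T_one (l : R) : T l 1 = invOneAdd l := by
  ext m
  simp [T, coeff_one, ite_mul]

noncomputable def truncT (l : R) (N : ℕ) (F : R⟦X⟧) : R⟦X⟧ :=
  ∑ i ∈ range N, C (coeff i F) * X ^ i * invOneAdd l ^ (i + 1)

lemma X_pow_dvd_T_sub_truncT (l : R) (N : ℕ) (F : R⟦X⟧) : X ^ N ∣ T l F - truncT l N F := by
  refine X_pow_dvd_iff.mpr fun m hm => ?_
  have hrange : (range N).filter (· ≤ m) = range (m + 1) := by
    ext i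
    simp only [mem_filter, mem_range]
    omega
  simp only [map_sub, T, truncT, coeff_mk, map_sum, mul_assoc, coeff_C_mul, coeff_X_pow_mul',
    mul_ite, mul_zero, ← sum_filter, hrange, sub_self]

lemma truncT_succ_X_mul (l : R) (N : ℕ) (F : R⟦X⟧) :
    truncT l (N + 1) (X * F) = X * invOneAdd l * truncT l N F := by
  simp only [truncT, sum_range_succ', coeff_succ_X_mul, coeff_zero_X_mul, map_zero, zero_mul,
    add_zero, mul_sum]
  exact sum_congr rfl fun i _ => by ring

lemma T_X_mul (l : R) (F : R⟦X⟧) : T l (X * F) = X * (invOneAdd l * T l F) := by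
  rw [← sub_eq_zero]
  ext m
  have hdvd : X ^ (m + 1) ∣ T l (X * F) - X * (invOneAdd l * T l F) := by
    have h := (pow_dvd_pow X (m + 1).le_succ).trans (X_pow_dvd_T_sub_truncT l (m + 2) (X * F))
    rw [truncT_succ_X_mul] at h
    convert dvd_sub h (dvd_mul_of_dvd_right (X_pow_dvd_T_sub_truncT l (m + 1) F) (X * invOneAdd l))
      using 1
    ring
  simpa using X_pow_dvd_iff.mp hdvd m m.lt_succ_self

lemma T_X_pow_mul (l : R) (k : ℕ) (F : R⟦X⟧) :
    T l (X ^ k * F) = X ^ k * (invOneAdd l ^ k * T l F) := by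
  induction k with
  | zero => simp
  | succ k ih =>
    rw [pow_succ', mul_assoc, T_X_mul, ih]
    ring

lemma T_neg_oneAdd_mul (d : R) (F : R⟦X⟧) :
    T (-d) (oneAdd d * F) = invOneAdd (-d) * T (-d) F := by
  have hinv : invOneAdd (-d) = 1 + C d * (X * invOneAdd (-d)) := by
    have h := oneAdd_mul_invOneAdd (-d)
    rw [oneAdd, map_neg] at h
    linear_combination h
  have hexpand : oneAdd d * F = F + C d * (X * F) := by
    rw [oneAdd]
    ring
  rw [hexpand, T_add, T_C_mul, T_X_mul]
  conv_rhs => rw [hinv]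
  ring

lemma T_neg_invOneAdd_mul (d : R) (F : R⟦X⟧) :
    T (-d) (invOneAdd d * F) = oneAdd (-d) * T (-d) F := by
  have h := T_neg_oneAdd_mul d (invOneAdd d * F)
  rw [← mul_assoc, oneAdd_mul_invOneAdd, one_mul] at h
  rw [h, ← mul_assoc, oneAdd_mul_invOneAdd, one_mul]

lemma T_neg_invOneAdd_pow_mul (d : R) (k : ℕ) (F : R⟦X⟧) :
    T (-d) (invOneAdd d ^ k * F) = oneAdd (-d) ^ k * T (-d) F := by
  induction k with
  | zero => simp
  | succ k ih =>
    rw [pow_succ', mul_assoc, T_neg_invOneAdd_mul, ih]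
    ring

end Tensor

/-- `T_{-d}(d^{n+1} t^{n+1} (1+dt)^{-(n+1)}) = d^{n+1} t^{n+1} (1-dt)⁻¹` (vertex
contribution in the linear-join formula). -/
theorem tensor_vertex_contribution {R : Type*} [CommRing R] (d : R) (n : ℕ) :
    T (-d) (PowerSeries.C (d ^ (n + 1)) * PowerSeries.X ^ (n + 1) *
        invOneAdd d ^ (n + 1)) =
      PowerSeries.C (d ^ (n + 1)) * PowerSeries.X ^ (n + 1) * invOneAdd (-d) := by
  rw [mul_assoc, T_C_mul, T_X_pow_mul, ← mul_one (invOneAdd d ^ (n + 1)),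
    T_neg_invOneAdd_pow_mul, T_one]
  have hcancel : invOneAdd (-d) ^ (n + 1) * oneAdd (-d) ^ (n + 1) = 1 := by
    rw [← mul_pow, mul_comm, oneAdd_mul_invOneAdd, one_pow]
  linear_combination (C (d ^ (n + 1)) * X ^ (n + 1) * invOneAdd (-d)) * hcancel
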